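/- Every finite-index subgroup N of ℤⁿ admits a minimal generating tuple, and for any minimal generating tuple (x₁,…,xₙ) of N, the vectors x₁,…,xₙ are linearly independent over ℝ and generate N as a group. -/

import Mathlib

/-- The constants `Dₙ`, defined recursively by `D₁ = 1` and
`Dₙ = D_{n−1}² · (4·n²·D_{n−1}³)ⁿ`. -/
noncomputable def Dc : ℕ → ℝ
  | 0 => 1
  | 1 => 1
  | (n + 2) => (Dc (n + 1)) ^ 2 * (4 * ((n + 2 : ℕ) : ℝ) ^ 2 * (Dc (n + 1)) ^ 3) ^ (n + 2)

/-- The canonical embedding of `ℤⁿ` into Euclidean space `ℝⁿ`. -/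
def toR {n : ℕ} (x : Fin n → ℤ) : EuclideanSpace ℝ (Fin n) := WithLp.toLp 2 (fun i => (x i : ℝ))

/-- `N ∩ Span_ℝ S = ⟨S⟩`: the elements of `N` lying in the real span of `S`
are exactly the subgroup generated by `S`. -/
def SpanCond {n : ℕ} (N : AddSubgroup (Fin n → ℤ)) (S : Set (Fin n → ℤ)) : Prop :=
  {y : Fin n → ℤ | y ∈ N ∧ toR y ∈ Submodule.span ℝ (toR '' S)} =
    (AddSubgroup.closure S : Set (Fin n → ℤ))

/-- `(x₁,…,xₙ)` is a minimal generating tuple of `N ≤ ℤⁿ`: each `xᵢ` lies in `N` outside the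
subgroup generated by the previous ones, satisfies `N ∩ Span_ℝ{x₁,…,xᵢ} = ⟨x₁,…,xᵢ⟩`, and has
minimal Euclidean norm among all such candidates. -/
def IsMinGenTuple {n : ℕ} (N : AddSubgroup (Fin n → ℤ)) (x : Fin n → (Fin n → ℤ)) : Prop :=
  ∀ i : Fin n,
    x i ∈ N ∧
    x i ∉ AddSubgroup.closure (x '' {j | j < i}) ∧
    SpanCond N (x '' {j | j ≤ i}) ∧
    ∀ y ∈ N, y ∉ AddSubgroup.closure (x '' {j | j < i}) →
      SpanCond N (insert y (x '' {j | j < i})) → ‖toR (x i)‖ ≤ ‖toR y‖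

/-!
Existence is by the greedy construction. Let `S` be the vectors chosen so far, with
`N ∩ span S = ⟨S⟩`, and `W = span S ≠ ℝⁿ`. Since `N` has finite index it has an element `z ∉ W`.
The ranks of sublattices of `ℤⁿ` equal the dimensions of their real spans (`ℤⁿ` is discrete in
`ℝⁿ`), so `Q = N ∩ (W + ℝz)` has rank at most one more than its saturated sublattice
`P = N ∩ W = ⟨S⟩`. Hence the torsion-free quotient `Q / P` is cyclic, and a lift `y` of a
generator satisfies `N ∩ span (S ∪ {y}) = ⟨S ∪ {y}⟩`; among such `y` a norm-minimal one exists
since squared norms are natural numbers.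

Conversely, in a minimal generating tuple no `xᵢ` lies in the span of `x₁, …, xᵢ₋₁`, because
`N ∩ span {x₁, …, xᵢ₋₁} = ⟨x₁, …, xᵢ₋₁⟩ ∌ xᵢ`. So the `xᵢ` are linearly independent and span
`ℝⁿ`, and the last span condition reads `N = ⟨x₁, …, xₙ⟩`.
-/

open Module Submodule

theorem Submodule.exists_forall_sub_smul_mem_of_finrank_le_succ {R M : Type*} [CommRing R]
    [IsDomain R] [IsPrincipalIdealRing R] [AddCommGroup M] [Module R M] {P Q : Submodule R M}
    [Module.Finite R Q] (hPQ : P ≤ Q) (hsat : ∀ m ∈ Q, ∀ c : R, c ≠ 0 → c • m ∈ P → m ∈ P)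
    (hrank : finrank R Q ≤ finrank R P + 1) :
    ∃ y ∈ Q, ∀ m ∈ Q, ∃ c : R, m - c • y ∈ P := by
  set P' := P.comap Q.subtype
  have : IsTorsionFree R (Q ⧸ P') := .of_smul_eq_zero fun c q hcq => by
    obtain ⟨m, rfl⟩ := P'.mkQ_surjective q
    rw [← map_smul, mkQ_apply, Quotient.mk_eq_zero] at hcq
    rw [mkQ_apply, Quotient.mk_eq_zero, or_iff_not_imp_left]
    exact fun hc => hsat m m.2 c hc hcq
  have hquot : finrank R (Q ⧸ P') ≤ 1 := by
    have := P'.finrank_quotient_add_finrank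
    rw [(comapSubtypeEquivOfLe hPQ).finrank_eq] at this
    omega
  obtain ⟨q, hq⟩ := finrank_le_one_iff.mp hquot
  obtain ⟨y, rfl⟩ := P'.mkQ_surjective q
  refine ⟨y, y.2, fun m hm => ?_⟩
  obtain ⟨c, hc⟩ := hq (P'.mkQ ⟨m, hm⟩)
  refine ⟨c, show (⟨m, hm⟩ - c • y : Q) ∈ P' from ?_⟩
  rw [← Quotient.mk_eq_zero, ← mkQ_apply, map_sub, map_smul, hc, sub_self]

theorem linearIndependent_of_notMem_span_image_Iio {ι K V : Type*} [Fintype ι] [LinearOrder ι]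
    [DivisionRing K] [AddCommGroup V] [Module K V] {v : ι → V}
    (hv : ∀ i, v i ∉ span K (v '' Set.Iio i)) : LinearIndependent K v := by
  classical
  rw [← linearIndepOn_univ_iff, ← Finset.coe_univ]
  induction (Finset.univ : Finset ι) using Finset.induction_on_max with
  | empty => simp
  | insert a s has ih =>
    rw [Finset.coe_insert, linearIndepOn_insert fun ha => lt_irrefl a (has a ha)]
    exact ⟨ih, fun hmem => hv a (span_mono (Set.image_mono fun j hj => has j hj) hmem)⟩

def toRₗ (n : ℕ) : (Fin n → ℤ) →ₗ[ℤ] EuclideanSpace ℝ (Fin n) where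
  toFun := toR
  map_add' _ _ := by ext i; simp [toR]
  map_smul' _ _ := by ext i; simp [toR]

lemma toR_injective (n : ℕ) : Function.Injective (toR (n := n)) := fun _ _ h =>
  funext fun i => Int.cast_injective (congrFun (congrArg WithLp.ofLp h) i)

lemma toR_zsmul {n : ℕ} (c : ℤ) (x : Fin n → ℤ) : toR (c • x) = (c : ℝ) • toR x := by
  ext i; simp [toR]

lemma toR_mem_span_basisFun {n : ℕ} (x : Fin n → ℤ) :
    toR x ∈ span ℤ (Set.range (EuclideanSpace.basisFun (Fin n) ℝ).toBasis) := by
  have : toR x = ∑ i, x i • (EuclideanSpace.basisFun (Fin n) ℝ).toBasis i := by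
    ext k; simp [toR, Pi.single_apply]
  rw [this]
  exact sum_mem fun i _ => zsmul_mem (subset_span (Set.mem_range_self i)) _

lemma span_range_toR (n : ℕ) : span ℝ (Set.range (toR (n := n))) = ⊤ := by
  refine eq_top_iff.mpr ((EuclideanSpace.basisFun (Fin n) ℝ).toBasis.span_eq.symm.le.trans
    (span_mono ?_))
  rintro - ⟨i, rfl⟩
  refine ⟨Pi.single i 1, ?_⟩
  ext k
  simp [toR, Pi.single_apply]

lemma span_toR_eq_top {n : ℕ} {N : AddSubgroup (Fin n → ℤ)} (hN : N.FiniteIndex) :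
    span ℝ (toR '' (N : Set (Fin n → ℤ))) = ⊤ := by
  refine eq_top_iff.mpr ((span_range_toR n).symm.le.trans (span_le.mpr ?_))
  rintro - ⟨v, rfl⟩
  have hmem : toR ((N.index : ℤ) • v) ∈ span ℝ (toR '' (N : Set (Fin n → ℤ))) :=
    subset_span (Set.mem_image_of_mem _ (by simpa using N.nsmul_index_mem v))
  rw [toR_zsmul] at hmem
  exact (smul_mem_iff _ (by exact_mod_cast hN.index_ne_zero)).mp hmem

lemma finrank_eq_finrank_span_toR {n : ℕ} (L : Submodule ℤ (Fin n → ℤ)) :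
    finrank ℤ L = finrank ℝ (span ℝ (toR '' (L : Set (Fin n → ℤ)))) := by
  have hdisc : DiscreteTopology (span ℤ (toR '' (L : Set (Fin n → ℤ)))) :=
    DiscreteTopology.of_subset (inferInstance : DiscreteTopology
      (span ℤ (Set.range (EuclideanSpace.basisFun (Fin n) ℝ).toBasis)))
      (span_le.mpr (Set.image_subset_iff.mpr fun x _ => toR_mem_span_basisFun x))
  have := Real.finrank_eq_int_finrank_of_discrete hdisc
  rw [Set.finrank, Set.finrank] at this
  rw [this, (L.equivMapOfInjective (toRₗ n) (toR_injective n)).finrank_eq, ← span_eq (L.map _),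
    map_coe]
  rfl

lemma norm_toR_sq {n : ℕ} (y : Fin n → ℤ) : ‖toR y‖ ^ 2 = ((∑ i, (y i).natAbs ^ 2 : ℕ) : ℝ) := by
  simp [EuclideanSpace.norm_sq_eq, toR]

lemma exists_forall_norm_toR_le {n : ℕ} {s : Set (Fin n → ℤ)} (hs : s.Nonempty) :
    ∃ y ∈ s, ∀ z ∈ s, ‖toR y‖ ≤ ‖toR z‖ := by
  let f : (Fin n → ℤ) → ℕ := fun y => ∑ i, (y i).natAbs ^ 2
  refine ⟨Function.argminOn f s hs, Function.argminOn_mem f s hs, fun z hz => ?_⟩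
  rw [← sq_le_sq₀ (norm_nonneg _) (norm_nonneg _), norm_toR_sq, norm_toR_sq]
  exact_mod_cast Function.argminOn_le f s hz

namespace Submodule

variable {n : ℕ} (L : Submodule ℤ (Fin n → ℤ))

def sublatticeIn (W : Submodule ℝ (EuclideanSpace ℝ (Fin n))) : Submodule ℤ (Fin n → ℤ) :=
  L ⊓ (W.restrictScalars ℤ).comap (toRₗ n)

variable {L} {W W' : Submodule ℝ (EuclideanSpace ℝ (Fin n))}

lemma mem_sublatticeIn {u : Fin n → ℤ} : u ∈ L.sublatticeIn W ↔ u ∈ L ∧ toR u ∈ W := Iff.rfl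

lemma sublatticeIn_mono {L' : Submodule ℤ (Fin n → ℤ)} (hL : L ≤ L') (hW : W ≤ W') :
    L.sublatticeIn W ≤ L'.sublatticeIn W' := fun _ hu => ⟨hL hu.1, hW hu.2⟩

lemma smul_mem_sublatticeIn_iff {u : Fin n → ℤ} (hu : u ∈ L) {c : ℤ} (hc : c ≠ 0) :
    c • u ∈ L.sublatticeIn W ↔ u ∈ L.sublatticeIn W := by
  rw [mem_sublatticeIn, mem_sublatticeIn, toR_zsmul,
    W.smul_mem_iff (Int.cast_ne_zero.mpr hc : (c : ℝ) ≠ 0)]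
  exact and_congr_left fun _ => iff_of_true (L.smul_mem c hu) hu

lemma finrank_sublatticeIn_le : finrank ℤ (L.sublatticeIn W) ≤ finrank ℝ W := by
  rw [finrank_eq_finrank_span_toR]
  exact finrank_mono (span_le.mpr (Set.image_subset_iff.mpr fun _ hu => hu.2))

lemma finrank_sublatticeIn_sup_span_singleton_le
    (hW : W ≤ span ℝ (toR '' (L.sublatticeIn W : Set (Fin n → ℤ))))
    (v : EuclideanSpace ℝ (Fin n)) :
    finrank ℤ (L.sublatticeIn (W ⊔ ℝ ∙ v)) ≤ finrank ℤ (L.sublatticeIn W) + 1 := calc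
  finrank ℤ (L.sublatticeIn (W ⊔ ℝ ∙ v)) ≤ finrank ℝ ↥(W ⊔ ℝ ∙ v) := finrank_sublatticeIn_le
  _ ≤ finrank ℝ W + finrank ℝ (ℝ ∙ v) := finrank_add_le_finrank_add_finrank _ _
  _ ≤ finrank ℝ W + 1 := by
    gcongr
    exact (finrank_span_le_card ({v} : Set _)).trans (by simp)
  _ ≤ finrank ℤ (L.sublatticeIn W) + 1 := by
    rw [finrank_eq_finrank_span_toR]
    gcongr
    exact finrank_mono hW

end Submodule

section SpanCond

variable {n : ℕ} {N : AddSubgroup (Fin n → ℤ)} {S : Set (Fin n → ℤ)}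

lemma SpanCond.mem_closure_iff (hS : SpanCond N S) {y : Fin n → ℤ} :
    y ∈ AddSubgroup.closure S ↔ y ∈ N ∧ toR y ∈ span ℝ (toR '' S) := by
  rw [← SetLike.mem_coe, ← hS]
  rfl

lemma spanCond_iff (hSN : S ⊆ N) :
    SpanCond N S ↔ ∀ y ∈ N, toR y ∈ span ℝ (toR '' S) → y ∈ AddSubgroup.closure S := by
  refine ⟨fun hS y hyN hy => hS.mem_closure_iff.mpr ⟨hyN, hy⟩, fun h => ?_⟩
  refine Set.Subset.antisymm (fun y hy => h y hy.1 hy.2) fun y hy => ?_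
  have hle : AddSubgroup.closure S ≤
      (N.toIntSubmodule.sublatticeIn (span ℝ (toR '' S))).toAddSubgroup :=
    (AddSubgroup.closure_le _).mpr fun s hs => ⟨hSN hs, subset_span (Set.mem_image_of_mem _ hs)⟩
  exact hle hy

variable (N) in
lemma spanCond_empty : SpanCond N ∅ := by
  refine (spanCond_iff (Set.empty_subset _)).mpr fun y _ hy => ?_
  rw [Set.image_empty, span_empty, mem_bot, ← (toRₗ n).map_zero] at hy
  rw [toR_injective n hy]
  exact zero_mem _

lemma SpanCond.exists_insert (hSN : S ⊆ N) (hS : SpanCond N S) {z : Fin n → ℤ} (hzN : z ∈ N)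
    (hz : toR z ∉ span ℝ (toR '' S)) :
    ∃ y ∈ N, y ∉ AddSubgroup.closure S ∧ SpanCond N (insert y S) := by
  set W := span ℝ (toR '' S)
  set Q := N.toIntSubmodule.sublatticeIn (W ⊔ ℝ ∙ toR z)
  set P := N.toIntSubmodule.sublatticeIn W
  have hP : ∀ u, u ∈ P ↔ u ∈ AddSubgroup.closure S := fun _ => hS.mem_closure_iff.symm
  have hPQ : P ≤ Q := sublatticeIn_mono le_rfl le_sup_left
  have hrank : finrank ℤ Q ≤ finrank ℤ P + 1 :=
    finrank_sublatticeIn_sup_span_singleton_le (span_mono (Set.image_mono fun s hs =>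
      (hP s).mpr (AddSubgroup.subset_closure hs))) _
  obtain ⟨y, hyQ, hgen⟩ := exists_forall_sub_smul_mem_of_finrank_le_succ hPQ
    (fun m hm c hc hcm => (smul_mem_sublatticeIn_iff hm.1 hc).mp hcm) hrank
  refine ⟨y, hyQ.1, fun hy => hz ?_, ?_⟩
  · obtain ⟨c, hc⟩ := hgen z ⟨hzN, mem_sup_right (mem_span_singleton_self _)⟩
    have : z ∈ P := by simpa using P.add_mem hc (P.smul_mem c ((hP y).mpr hy))
    exact this.2
  refine (spanCond_iff (Set.insert_subset hyQ.1 hSN)).mpr fun u huN hu => ?_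
  have hsub : span ℝ (toR '' insert y S) ≤ W ⊔ ℝ ∙ toR z := by
    rw [Set.image_insert_eq, span_insert]
    exact sup_le ((span_singleton_le_iff_mem _ _).mpr hyQ.2) le_sup_left
  obtain ⟨c, hc⟩ := hgen u ⟨huN, hsub hu⟩
  rw [← sub_add_cancel u (c • y)]
  exact add_mem (AddSubgroup.closure_mono (Set.subset_insert y S) ((hP _).mp hc))
    (zsmul_mem (AddSubgroup.subset_closure (Set.mem_insert y S)) c)

end SpanCond

section Tuple

variable {n : ℕ} {N : AddSubgroup (Fin n → ℤ)}

variable (N) in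
def IsMinExtension (S : Set (Fin n → ℤ)) (y : Fin n → ℤ) : Prop :=
  y ∈ N ∧ y ∉ AddSubgroup.closure S ∧ SpanCond N (insert y S) ∧
    ∀ y' ∈ N, y' ∉ AddSubgroup.closure S → SpanCond N (insert y' S) → ‖toR y‖ ≤ ‖toR y'‖

lemma exists_isMinExtension (hN : N.FiniteIndex) {S : Set (Fin n → ℤ)} (hSN : S ⊆ N)
    (hS : SpanCond N S) (hW : span ℝ (toR '' S) ≠ ⊤) : ∃ y, IsMinExtension N S y := by
  obtain ⟨z, hzN, hz⟩ : ∃ z ∈ N, toR z ∉ span ℝ (toR '' S) := by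
    by_contra! h
    exact hW (eq_top_iff.mpr ((span_toR_eq_top hN).symm.le.trans
      (span_le.mpr (Set.image_subset_iff.mpr h))))
  obtain ⟨y, ⟨hyN, hyS, hy⟩, hmin⟩ := exists_forall_norm_toR_le (hS.exists_insert hSN hzN hz)
  exact ⟨y, hyN, hyS, hy, fun y' h₁ h₂ h₃ => hmin y' ⟨h₁, h₂, h₃⟩⟩

lemma isMinGenTuple_iff {x : Fin n → Fin n → ℤ} :
    IsMinGenTuple N x ↔ ∀ i, IsMinExtension N (x '' {j | j < i}) (x i) := by
  refine forall_congr' fun i => ?_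
  have hIic : x '' {j | j ≤ i} = insert (x i) (x '' {j | j < i}) := by
    rw [← Set.image_insert_eq]
    exact congrArg _ Set.Iio_insert.symm
  rw [IsMinExtension, hIic]

lemma spanCond_image_Iio {x : Fin n → Fin n → ℤ} {i : Fin n}
    (h : ∀ j < i, SpanCond N (insert (x j) (x '' {k | k < j}))) :
    SpanCond N (x '' {k | k < i}) := by
  obtain ⟨_ | m, hm⟩ := i
  · convert spanCond_empty N
    simp [Fin.lt_def]
  · convert h ⟨m, Nat.lt_of_succ_lt hm⟩ (Fin.mk_lt_mk.mpr m.lt_succ_self) using 2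
    rw [← Set.image_insert_eq]
    congr 1
    ext k
    simp only [Set.mem_ofPred_eq, Set.mem_insert_iff, Fin.lt_def, Fin.ext_iff]
    omega

lemma span_toR_image_Iio_ne_top (x : Fin n → Fin n → ℤ) (i : Fin n) :
    span ℝ (toR '' (x '' {j | j < i})) ≠ ⊤ := by
  intro htop
  have hcard := finrank_span_finset_le_card (R := ℝ) ((Finset.Iio i).image (toR ∘ x))
  rw [Finset.coe_image, Finset.coe_Iio, Set.image_comp, Set.finrank] at hcard
  change finrank ℝ (span ℝ (toR '' (x '' {j | j < i}))) ≤ _ at hcard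
  rw [htop, finrank_top, finrank_euclideanSpace_fin] at hcard
  have := (hcard.trans Finset.card_image_le).trans_eq (Fin.card_Iio i)
  omega

variable (N) in
/-- `Classical.epsilon` returns junk when there is no admissible next vector; by
`exists_isMinExtension` this does not happen when `N` has finite index. -/
noncomputable def greedyTuple : Fin n → Fin n → ℤ :=
  wellFounded_lt.fix fun i x =>
    Classical.epsilon (IsMinExtension N (Set.range fun j : Set.Iio i => x j j.2))

lemma greedyTuple_apply (i : Fin n) :
    greedyTuple N i = Classical.epsilon (IsMinExtension N (greedyTuple N '' {j | j < i})) := by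
  rw [greedyTuple, WellFounded.fix_eq, Set.image_eq_range]
  rfl

lemma isMinGenTuple_greedyTuple (hN : N.FiniteIndex) : IsMinGenTuple N (greedyTuple N) := by
  refine isMinGenTuple_iff.mpr fun i => ?_
  induction i using WellFoundedLT.induction with | _ i ih
  rw [greedyTuple_apply]
  refine Classical.epsilon_spec (exists_isMinExtension hN ?_ ?_ (span_toR_image_Iio_ne_top _ i))
  · rintro - ⟨j, hj, rfl⟩
    exact (ih j hj).1
  · exact spanCond_image_Iio fun j hj => (ih j hj).2.2.1

lemma IsMinGenTuple.linearIndependent {x : Fin n → Fin n → ℤ} (hx : IsMinGenTuple N x) :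
    LinearIndependent ℝ (fun i => toR (x i)) := by
  rw [isMinGenTuple_iff] at hx
  refine linearIndependent_of_notMem_span_image_Iio fun i hi => (hx i).2.1 ?_
  rw [← Set.image_image] at hi
  exact (spanCond_image_Iio fun j _ => (hx j).2.2.1).mem_closure_iff.mpr ⟨(hx i).1, hi⟩

lemma IsMinGenTuple.closure_range {x : Fin n → Fin n → ℤ} (hx : IsMinGenTuple N x) :
    AddSubgroup.closure (Set.range x) = N := by
  obtain _ | m := n
  · exact Subsingleton.elim _ _
  have hS : SpanCond N (Set.range x) := by
    simpa [Fin.le_last] using (hx (Fin.last m)).2.2.1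
  have htop : span ℝ (toR '' Set.range x) = ⊤ := by
    rw [← Set.range_comp]
    exact hx.linearIndependent.span_eq_top_of_card_eq_finrank (by simp)
  ext y
  rw [hS.mem_closure_iff, htop]
  simp

end Tuple

/-- Every finite-index subgroup `N` of `ℤⁿ` admits a minimal generating tuple,
and for any minimal generating tuple `(x₁,…,xₙ)` of `N`, the vectors `x₁,…,xₙ` are linearly
independent over `ℝ` and generate `N` as a group. -/
theorem stmt5 (n : ℕ) (N : AddSubgroup (Fin n → ℤ)) (hN : N.FiniteIndex) :
    (∃ x : Fin n → (Fin n → ℤ), IsMinGenTuple N x) ∧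
      ∀ x : Fin n → (Fin n → ℤ), IsMinGenTuple N x →
        LinearIndependent ℝ (fun i => toR (x i)) ∧
          AddSubgroup.closure (Set.range x) = N :=
  ⟨⟨greedyTuple N, isMinGenTuple_greedyTuple hN⟩,
    fun _ hx => ⟨hx.linearIndependent, hx.closure_range⟩⟩
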